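/- The pair (V_⋆, ω_⋆) is a symplectic ℝ[[λ]]-module, where V_⋆ := A[[λ]]/P_⋆[A[[λ]]] and ω_⋆([φ],[ψ]) := β(φ, Δ_⋆(ψ)): the map ω_⋆ is well-defined on the quotient (independent of the choice of representatives), ℝ[[λ]]-bilinear, antisymmetric, and weakly nondegenerate, i.e. ω_⋆([φ],[ψ]) = 0 for all [ψ] ∈ V_⋆ implies [φ] = 0. -/

import Mathlib

open Finset

noncomputable section

namespace NCQFT

theorem sum_ad_assoc {M : Type*} [AddCommMonoid M] (n : ℕ) (G : ℕ → ℕ → ℕ → M) :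
    ∑ p ∈ antidiagonal n, ∑ q ∈ antidiagonal p.2, G p.1 q.1 q.2
      = ∑ p ∈ antidiagonal n, ∑ q ∈ antidiagonal p.1, G q.1 q.2 p.2 := by
  rw [Finset.sum_sigma', Finset.sum_sigma']
  refine Finset.sum_nbij' (fun x => ⟨(x.1.1 + x.2.1, x.2.2), (x.1.1, x.2.1)⟩)
    (fun x => ⟨(x.2.1, x.2.2 + x.1.2), (x.2.2, x.1.2)⟩) ?_ ?_ ?_ ?_ ?_
  · rintro ⟨⟨a, k⟩, b, c⟩ h
    simp only [Finset.mem_sigma, HasAntidiagonal.mem_antidiagonal] at h ⊢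
    refine ⟨by omega, ?_⟩
    try trivial
    try omega
  · rintro ⟨⟨i, c⟩, a, b⟩ h
    simp only [Finset.mem_sigma, HasAntidiagonal.mem_antidiagonal] at h ⊢
    refine ⟨by omega, ?_⟩
    try trivial
    try omega
  · rintro ⟨⟨a, k⟩, b, c⟩ h
    simp only [Finset.mem_sigma, HasAntidiagonal.mem_antidiagonal] at h
    obtain ⟨-, h2⟩ := h
    subst h2
    rfl
  · rintro ⟨⟨i, c⟩, a, b⟩ h
    simp only [Finset.mem_sigma, HasAntidiagonal.mem_antidiagonal] at h
    obtain ⟨-, h2⟩ := h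
    subst h2
    rfl
  · rintro ⟨⟨a, k⟩, b, c⟩ h
    rfl

theorem sum_ad_swap {M : Type*} [AddCommMonoid M] (n : ℕ) (G : ℕ → ℕ → ℕ → M) :
    ∑ p ∈ antidiagonal n, ∑ q ∈ antidiagonal p.2, G p.1 q.1 q.2
      = ∑ p ∈ antidiagonal n, ∑ q ∈ antidiagonal p.2, G q.1 p.1 q.2 := by
  rw [Finset.sum_sigma', Finset.sum_sigma']
  refine Finset.sum_nbij' (fun x => ⟨(x.2.1, x.1.1 + x.2.2), (x.1.1, x.2.2)⟩)
    (fun x => ⟨(x.2.1, x.1.1 + x.2.2), (x.1.1, x.2.2)⟩) ?_ ?_ ?_ ?_ ?_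
  · rintro ⟨⟨a, k⟩, b, c⟩ h
    simp only [Finset.mem_sigma, HasAntidiagonal.mem_antidiagonal] at h ⊢
    refine ⟨by omega, ?_⟩
    try trivial
    try omega
  · rintro ⟨⟨b, k⟩, a, c⟩ h
    simp only [Finset.mem_sigma, HasAntidiagonal.mem_antidiagonal] at h ⊢
    refine ⟨by omega, ?_⟩
    try trivial
    try omega
  · rintro ⟨⟨a, k⟩, b, c⟩ h
    simp only [Finset.mem_sigma, HasAntidiagonal.mem_antidiagonal] at h
    obtain ⟨-, h2⟩ := h
    subst h2
    rfl
  · rintro ⟨⟨b, k⟩, a, c⟩ h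
    simp only [Finset.mem_sigma, HasAntidiagonal.mem_antidiagonal] at h
    obtain ⟨-, h2⟩ := h
    subst h2
    rfl
  · rintro ⟨⟨a, k⟩, b, c⟩ h
    rfl

variable {K : Type*} [CommRing K]

/-- The Cauchy-product scalar multiplication of `K[[λ]]` on `V[[λ]] = (ℕ → V)`. -/
def fpsSMul {V : Type*} [AddCommGroup V] [Module K V] (c : PowerSeries K) (v : ℕ → V) :
    ℕ → V :=
  fun n => ∑ p ∈ antidiagonal n, PowerSeries.coeff (R := K) p.1 c • v p.2

theorem fpsSMul_one {V : Type*} [AddCommGroup V] [Module K V] (v : ℕ → V) :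
    fpsSMul (1 : PowerSeries K) v = v := by
  funext n
  rw [fpsSMul, Finset.sum_eq_single (0, n)]
  · simp
  · rintro ⟨i, j⟩ hmem hne
    rw [PowerSeries.coeff_one, if_neg, zero_smul]
    rintro rfl
    apply hne
    simp only [HasAntidiagonal.mem_antidiagonal] at hmem
    simp [← hmem]
  · intro h
    exact absurd (by simp) h

theorem fpsSMul_mul {V : Type*} [AddCommGroup V] [Module K V] (c d : PowerSeries K)
    (v : ℕ → V) : fpsSMul (c * d) v = fpsSMul c (fpsSMul d v) := by
  funext n
  rw [fpsSMul]
  calc ∑ p ∈ antidiagonal n, PowerSeries.coeff (R := K) p.1 (c * d) • v p.2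
      = ∑ p ∈ antidiagonal n, ∑ q ∈ antidiagonal p.1,
          (PowerSeries.coeff (R := K) q.1 c * PowerSeries.coeff (R := K) q.2 d) • v p.2 := by
        refine Finset.sum_congr rfl fun p _ => ?_
        rw [PowerSeries.coeff_mul, Finset.sum_smul]
    _ = ∑ p ∈ antidiagonal n, ∑ q ∈ antidiagonal p.2,
          (PowerSeries.coeff (R := K) p.1 c * PowerSeries.coeff (R := K) q.1 d) • v q.2 :=
        (sum_ad_assoc n fun a b e => (PowerSeries.coeff (R := K) a c * PowerSeries.coeff (R := K) b d) • v e).symm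
    _ = fpsSMul c (fpsSMul d v) n := by
        rw [fpsSMul]
        refine Finset.sum_congr rfl fun p _ => ?_
        rw [fpsSMul, Finset.smul_sum]
        exact Finset.sum_congr rfl fun q _ => (mul_smul _ _ _)

instance fpsModule {V : Type*} [AddCommGroup V] [Module K V] :
    Module (PowerSeries K) (ℕ → V) where
  smul := fpsSMul
  one_smul := fpsSMul_one
  mul_smul := fpsSMul_mul
  smul_zero c := by
    funext n
    show fpsSMul c (0 : ℕ → V) n = 0
    simp [fpsSMul]
  smul_add c u v := by
    funext n
    show fpsSMul c (u + v) n = fpsSMul c u n + fpsSMul c v n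
    simp [fpsSMul, Finset.sum_add_distrib, smul_add]
  add_smul c d v := by
    funext n
    show fpsSMul (c + d) v n = fpsSMul c v n + fpsSMul d v n
    simp [fpsSMul, Finset.sum_add_distrib, add_smul]
  zero_smul v := by
    funext n
    show fpsSMul (0 : PowerSeries K) v n = 0
    simp [fpsSMul]

theorem fps_smul_apply {V : Type*} [AddCommGroup V] [Module K V]
    (c : PowerSeries K) (v : ℕ → V) (n : ℕ) :
    (c • v) n = ∑ p ∈ antidiagonal n, PowerSeries.coeff (R := K) p.1 c • v p.2 := rfl

/-- The `K[[λ]]`-linear map `V[[λ]] → W[[λ]]` induced by a family of `K`-linear maps,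
`F_⋆ = Σ λⁿ F_(n)`. -/
def starMap {V W : Type*} [AddCommGroup V] [Module K V] [AddCommGroup W] [Module K W]
    (F : ℕ → V →ₗ[K] W) : (ℕ → V) →ₗ[PowerSeries K] (ℕ → W) where
  toFun u := fun n => ∑ p ∈ antidiagonal n, F p.1 (u p.2)
  map_add' u v := by
    funext n
    simp [Finset.sum_add_distrib]
  map_smul' c u := by
    funext n
    show ∑ p ∈ antidiagonal n, F p.1 ((c • u) p.2)
        = (c • fun m => ∑ q ∈ antidiagonal m, F q.1 (u q.2)) n
    simp only [fps_smul_apply, map_sum, map_smul, Finset.smul_sum]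
    exact sum_ad_swap n fun a b e => PowerSeries.coeff (R := K) b c • F a (u e)

theorem starMap_apply {V W : Type*} [AddCommGroup V] [Module K V] [AddCommGroup W] [Module K W]
    (F : ℕ → V →ₗ[K] W) (u : ℕ → V) (n : ℕ) :
    starMap F u n = ∑ p ∈ antidiagonal n, F p.1 (u p.2) := rfl

/-- The coefficientwise application of a single `K`-linear map, as a `K[[λ]]`-linear map. -/
def cwMap {V W : Type*} [AddCommGroup V] [Module K V] [AddCommGroup W] [Module K W]
    (F : V →ₗ[K] W) : (ℕ → V) →ₗ[PowerSeries K] (ℕ → W) where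
  toFun u := fun n => F (u n)
  map_add' u v := by funext n; simp
  map_smul' c u := by
    funext n
    show F ((c • u) n) = (c • fun m => F (u m)) n
    simp only [fps_smul_apply, map_sum, map_smul]

theorem cwMap_apply {V W : Type*} [AddCommGroup V] [Module K V] [AddCommGroup W] [Module K W]
    (F : V →ₗ[K] W) (u : ℕ → V) (n : ℕ) : cwMap F u n = F (u n) := rfl


variable {B : Type*} [AddCommGroup B] [Module ℝ B]

/-- `chain D Pn [j₁, …, j_k] = D ∘ P_(j₁) ∘ D ∘ P_(j₂) ∘ ⋯ ∘ D ∘ P_(j_k) ∘ D`. -/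
def chain (D : B →ₗ[ℝ] B) (Pn : ℕ → B →ₗ[ℝ] B) : List ℕ → (B →ₗ[ℝ] B)
  | [] => D
  | j :: t => D ∘ₗ Pn j ∘ₗ chain D Pn t

/-- The `n`-th coefficient `Δ_(n)±` of the deformed Green's operator:
`Δ_(n)± = Σ_{k=1}^{n} Σ_{j₁+⋯+j_k = n, jᵢ ≥ 1} (−1)^k Δ_± ∘ P_(j₁) ∘ Δ_± ∘ ⋯ ∘ Δ_± ∘ P_(j_k) ∘ Δ_±`,
realized as a sum over all compositions `(j₁, …, j_k)` of `n` (for `n = 0` it equals `Δ_±`). -/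
def dGreen (D : B →ₗ[ℝ] B) (Pn : ℕ → B →ₗ[ℝ] B) (n : ℕ) : B →ₗ[ℝ] B :=
  ∑ c : Composition n, ((-1 : ℝ) ^ c.blocks.length) • chain D Pn c.blocks

/-- The family `Q_(n)` of `Q := Σ_{n ≥ 1} λⁿ P_(n)` (the `λ⁰`-coefficient is dropped). -/
def posPart (Pn : ℕ → B →ₗ[ℝ] B) : ℕ → B →ₗ[ℝ] B :=
  fun n => if n = 0 then 0 else Pn n

/-- The `ℝ[[λ]]`-bilinear extension of a bilinear form `β : B × B → ℝ` to `B[[λ]]`. -/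
def betaSeries (β : B →ₗ[ℝ] B →ₗ[ℝ] ℝ) (u v : ℕ → B) : PowerSeries ℝ :=
  PowerSeries.mk fun n => ∑ p ∈ antidiagonal n, β (u p.1) (v p.2)

/-- The family `P_(n)`, restricted to maps `A → A`
(using `P(A) ⊆ A` and `P_(n)(B) ⊆ A` for `n ≥ 1`). -/
def restA (A : Submodule ℝ B) (Pn : ℕ → B →ₗ[ℝ] B) (hPA : ∀ a ∈ A, Pn 0 a ∈ A)
    (hPpos : ∀ n, 0 < n → ∀ u : B, Pn n u ∈ A) (n : ℕ) : ↥A →ₗ[ℝ] ↥A :=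
  (Pn n).restrict (p := A) (q := A) (fun x hx => by
    rcases Nat.eq_zero_or_pos n with h | h
    · exact h ▸ hPA x hx
    · exact hPpos n h x)



section Aux

theorem comp_zero_blocks (c : Composition 0) : c.blocks = [] := by
  cases hb : c.blocks with
  | nil => rfl
  | cons a t =>
    have h1 : 0 < a := c.blocks_pos (by rw [hb]; exact List.mem_cons_self)
    have h2 := c.blocks_sum
    rw [hb] at h2
    simp at h2
    omega

instance : Subsingleton (Composition 0) :=
  ⟨fun a b => Composition.ext (by rw [comp_zero_blocks, comp_zero_blocks])⟩

instance : Unique (Composition 0) := Unique.mk' _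

theorem dGreen_zero (D : B →ₗ[ℝ] B) (Pn : ℕ → B →ₗ[ℝ] B) : dGreen D Pn 0 = D := by
  rw [dGreen, Finset.univ_unique, Finset.sum_singleton, comp_zero_blocks]
  simp [chain]

theorem dGreen_rec (D : B →ₗ[ℝ] B) (Pn : ℕ → B →ₗ[ℝ] B) (n : ℕ) (hn : n ≠ 0) (u : B) :
    dGreen D Pn n u
      = -∑ j ∈ Finset.range n, D (Pn (j + 1) (dGreen D Pn (n - (j + 1)) u)) := by
  have expand : ∀ j ∈ Finset.range n,
      -D (Pn (j + 1) (dGreen D Pn (n - (j + 1)) u))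
        = ∑ c : Composition (n - (j + 1)),
            ((-1 : ℝ) ^ (c.blocks.length + 1) • chain D Pn ((j + 1) :: c.blocks)) u := by
    intro j hj
    rw [dGreen, LinearMap.sum_apply, map_sum, map_sum, ← Finset.sum_neg_distrib]
    refine Finset.sum_congr rfl fun c _ => ?_
    rw [LinearMap.smul_apply, map_smul, map_smul]
    show -((-1 : ℝ) ^ c.blocks.length • D (Pn (j+1) (chain D Pn c.blocks u)))
      = (-1 : ℝ) ^ (c.blocks.length + 1) • D (Pn (j+1) (chain D Pn c.blocks u))
    rw [pow_succ, mul_comm, mul_smul, neg_one_smul]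
  rw [← Finset.sum_neg_distrib, Finset.sum_congr rfl expand, dGreen, LinearMap.sum_apply]
  rw [Finset.sum_sigma' (Finset.range n)
    (fun j => (Finset.univ : Finset (Composition (n - (j + 1)))))]
  refine (Finset.sum_bij
    (i := fun (x : Σ j : ℕ, Composition (n - (j + 1)))
      (hx : x ∈ (Finset.range n).sigma fun j => (Finset.univ : Finset (Composition (n - (j + 1))))) =>
      (⟨(x.1 + 1) :: x.2.blocks, by
        intro i hi
        rcases List.mem_cons.mp hi with h | h
        · omega
        · exact x.2.blocks_pos h, by
        have hx1 : x.1 < n := Finset.mem_range.mp (Finset.mem_sigma.mp hx).1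
        have := x.2.blocks_sum
        simp only [List.sum_cons]
        omega⟩ : Composition n))
    ?_ ?_ ?_ ?_).symm
  · intro a _
    exact Finset.mem_univ _
  · rintro ⟨j1, c1⟩ h1 ⟨j2, c2⟩ h2 heq
    have hb := congrArg Composition.blocks heq
    simp only [List.cons.injEq] at hb
    obtain ⟨hj, hc⟩ := hb
    have hj' : j1 = j2 := by omega
    subst hj'
    congr 1
    exact Composition.ext hc
  · intro b _
    have hne : b.blocks ≠ [] := by
      intro h
      have hbs := b.blocks_sum
      rw [h] at hbs
      simp at hbs
      omega
    obtain ⟨a, t, hb⟩ := List.exists_cons_of_ne_nil hne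
    have hpos : 0 < a := b.blocks_pos (by rw [hb]; exact List.mem_cons_self)
    have hsum := b.blocks_sum
    rw [hb, List.sum_cons] at hsum
    have htpos : ∀ i ∈ t, 0 < i := fun i hi =>
      b.blocks_pos (by rw [hb]; exact List.mem_cons_of_mem a hi)
    have hc : t.sum = n - (a - 1 + 1) := by omega
    refine ⟨⟨a - 1, ⟨t, fun {i} hi => htpos i hi, hc⟩⟩,
      Finset.mem_sigma.mpr ⟨Finset.mem_range.mpr (show a - 1 < n by omega), Finset.mem_univ _⟩, ?_⟩
    apply Composition.ext
    simp only [hb]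
    show (a - 1 + 1) :: t = a :: t
    congr 1
    omega
  · rintro ⟨j, c⟩ h
    rfl

theorem PD_sum (A : Submodule ℝ B) (Pn : ℕ → B →ₗ[ℝ] B) (D : B →ₗ[ℝ] B)
    (hPD : ∀ a ∈ A, Pn 0 (D a) = a)
    (hPpos : ∀ n, 0 < n → ∀ u : B, Pn n u ∈ A)
    (a : B) (ha : a ∈ A) (n : ℕ) :
    ∑ p ∈ antidiagonal n, Pn p.1 (dGreen D Pn p.2 a) = if n = 0 then a else 0 := by
  rcases Nat.eq_zero_or_pos n with rfl | hn
  · simp only [Finset.Nat.antidiagonal_zero, Finset.sum_singleton, if_pos rfl, dGreen_zero]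
    exact hPD a ha
  · rw [if_neg (by omega)]
    rw [Finset.Nat.sum_antidiagonal_eq_sum_range_succ (fun m k => Pn m (dGreen D Pn k a)) n]
    rw [Finset.sum_range_succ']
    have h0 : Pn 0 (dGreen D Pn (n - 0) a)
        = -∑ j ∈ Finset.range n, Pn (j + 1) (dGreen D Pn (n - (j + 1)) a) := by
      rw [Nat.sub_zero, dGreen_rec D Pn n (by omega) a, map_neg, map_sum]
      congr 1
      refine Finset.sum_congr rfl fun j hj => ?_
      exact hPD _ (hPpos (j + 1) (by omega) _)
    rw [h0]
    exact add_neg_cancel _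

theorem starMap_starMap_coeff (F G : ℕ → B →ₗ[ℝ] B) (u : ℕ → B) (n : ℕ) :
    starMap F (starMap G u) n
      = ∑ p ∈ antidiagonal n, ∑ q ∈ antidiagonal p.1, F q.1 (G q.2 (u p.2)) := by
  rw [starMap_apply, ← sum_ad_assoc n (fun a b c => F a (G b (u c)))]
  refine Finset.sum_congr rfl fun p _ => ?_
  rw [starMap_apply (K := ℝ), map_sum]

theorem Pst_Gst (A : Submodule ℝ B) (Pn : ℕ → B →ₗ[ℝ] B) (D : B →ₗ[ℝ] B)
    (hPD : ∀ a ∈ A, Pn 0 (D a) = a)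
    (hPpos : ∀ n, 0 < n → ∀ u : B, Pn n u ∈ A)
    (ψ : ℕ → ↥A) :
    starMap Pn (starMap (dGreen D Pn) (cwMap A.subtype ψ)) = cwMap A.subtype ψ := by
  funext n
  rw [starMap_starMap_coeff]
  have h1 : ∀ p ∈ antidiagonal n,
      ∑ q ∈ antidiagonal p.1, Pn q.1 (dGreen D Pn q.2 (cwMap A.subtype ψ p.2))
        = if p.1 = 0 then ((ψ p.2 : B)) else 0 := fun p _ =>
    PD_sum A Pn D hPD hPpos _ (ψ p.2).2 p.1
  rw [Finset.sum_congr rfl h1, Finset.sum_eq_single (0, n)]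
  · rfl
  · rintro ⟨i, j⟩ hmem hne
    rw [if_neg]
    intro hi
    apply hne
    simp only [Finset.HasAntidiagonal.mem_antidiagonal] at hmem
    subst hi
    simp at hmem
    simp [hmem]
  · intro h
    exact absurd (by simp) h

theorem iota_Pst (A : Submodule ℝ B) (Pn : ℕ → B →ₗ[ℝ] B)
    (hPA : ∀ a ∈ A, Pn 0 a ∈ A) (hPpos : ∀ n, 0 < n → ∀ u : B, Pn n u ∈ A)
    (χ : ℕ → ↥A) :
    starMap Pn (cwMap A.subtype χ) = cwMap A.subtype (starMap (restA A Pn hPA hPpos) χ) := by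
  funext n
  show ∑ p ∈ antidiagonal n, Pn p.1 ((χ p.2 : B))
      = A.subtype (∑ p ∈ antidiagonal n, restA A Pn hPA hPpos p.1 (χ p.2))
  rw [map_sum]
  rfl

theorem betaSeries_coeff (β : B →ₗ[ℝ] B →ₗ[ℝ] ℝ) (u v : ℕ → B) (n : ℕ) :
    PowerSeries.coeff (R := ℝ) n (betaSeries β u v) = ∑ p ∈ antidiagonal n, β (u p.1) (v p.2) :=
  PowerSeries.coeff_mk _ _

theorem betaSeries_symm (β : B →ₗ[ℝ] B →ₗ[ℝ] ℝ) (hβsymm : ∀ u v : B, β u v = β v u)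
    (u v : ℕ → B) : betaSeries β u v = betaSeries β v u := by
  ext n
  rw [betaSeries_coeff, betaSeries_coeff,
    ← Finset.Nat.sum_antidiagonal_swap (f := fun p => β (v p.1) (u p.2))]
  exact Finset.sum_congr rfl fun p _ => hβsymm _ _

theorem betaSeries_add_left (β : B →ₗ[ℝ] B →ₗ[ℝ] ℝ) (u u' v : ℕ → B) :
    betaSeries β (u + u') v = betaSeries β u v + betaSeries β u' v := by
  ext n
  simp [betaSeries_coeff, Finset.sum_add_distrib]

theorem betaSeries_add_right (β : B →ₗ[ℝ] B →ₗ[ℝ] ℝ) (u v v' : ℕ → B) :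
    betaSeries β u (v + v') = betaSeries β u v + betaSeries β u v' := by
  ext n
  simp [betaSeries_coeff, Finset.sum_add_distrib]

theorem betaSeries_sub_left (β : B →ₗ[ℝ] B →ₗ[ℝ] ℝ) (u u' v : ℕ → B) :
    betaSeries β (u - u') v = betaSeries β u v - betaSeries β u' v := by
  ext n
  simp [betaSeries_coeff, Finset.sum_sub_distrib]

theorem betaSeries_sub_right (β : B →ₗ[ℝ] B →ₗ[ℝ] ℝ) (u v v' : ℕ → B) :
    betaSeries β u (v - v') = betaSeries β u v - betaSeries β u v' := by
  ext n
  simp [betaSeries_coeff, Finset.sum_sub_distrib]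

theorem betaSeries_smul_left (β : B →ₗ[ℝ] B →ₗ[ℝ] ℝ) (c : PowerSeries ℝ) (u v : ℕ → B) :
    betaSeries β (c • u) v = c * betaSeries β u v := by
  ext n
  rw [betaSeries_coeff, PowerSeries.coeff_mul]
  calc ∑ p ∈ antidiagonal n, β ((c • u) p.1) (v p.2)
      = ∑ p ∈ antidiagonal n, ∑ q ∈ antidiagonal p.1,
          PowerSeries.coeff (R := ℝ) q.1 c * β (u q.2) (v p.2) := by
        refine Finset.sum_congr rfl fun p _ => ?_
        rw [fps_smul_apply, map_sum, LinearMap.sum_apply]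
        exact Finset.sum_congr rfl fun q _ => by
          rw [map_smul, LinearMap.smul_apply, smul_eq_mul]
    _ = ∑ p ∈ antidiagonal n, ∑ q ∈ antidiagonal p.2,
          PowerSeries.coeff (R := ℝ) p.1 c * β (u q.1) (v q.2) :=
        (sum_ad_assoc n fun a b e => PowerSeries.coeff (R := ℝ) a c * β (u b) (v e)).symm
    _ = ∑ p ∈ antidiagonal n,
          PowerSeries.coeff (R := ℝ) p.1 c * PowerSeries.coeff (R := ℝ) p.2 (betaSeries β u v) := by
        refine Finset.sum_congr rfl fun p _ => ?_
        rw [betaSeries_coeff, Finset.mul_sum]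

theorem betaSeries_smul_right (β : B →ₗ[ℝ] B →ₗ[ℝ] ℝ) (c : PowerSeries ℝ) (u v : ℕ → B) :
    betaSeries β u (c • v) = c * betaSeries β u v := by
  ext n
  rw [betaSeries_coeff, PowerSeries.coeff_mul]
  calc ∑ p ∈ antidiagonal n, β (u p.1) ((c • v) p.2)
      = ∑ p ∈ antidiagonal n, ∑ q ∈ antidiagonal p.2,
          PowerSeries.coeff (R := ℝ) q.1 c * β (u p.1) (v q.2) := by
        refine Finset.sum_congr rfl fun p _ => ?_
        rw [fps_smul_apply, map_sum]
        exact Finset.sum_congr rfl fun q _ => by rw [map_smul, smul_eq_mul]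
    _ = ∑ p ∈ antidiagonal n, ∑ q ∈ antidiagonal p.2,
          PowerSeries.coeff (R := ℝ) p.1 c * β (u q.1) (v q.2) :=
        sum_ad_swap n fun a b e => PowerSeries.coeff (R := ℝ) b c * β (u a) (v e)
    _ = ∑ p ∈ antidiagonal n,
          PowerSeries.coeff (R := ℝ) p.1 c * PowerSeries.coeff (R := ℝ) p.2 (betaSeries β u v) := by
        refine Finset.sum_congr rfl fun p _ => ?_
        rw [betaSeries_coeff, Finset.mul_sum]

/-- `β_⋆` as an `ℝ[[λ]]`-bilinear map. -/
def betaBil (β : B →ₗ[ℝ] B →ₗ[ℝ] ℝ) :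
    (ℕ → B) →ₗ[PowerSeries ℝ] (ℕ → B) →ₗ[PowerSeries ℝ] PowerSeries ℝ where
  toFun u :=
    { toFun := fun v => betaSeries β u v
      map_add' := betaSeries_add_right β u
      map_smul' := fun c v => by
        simp only [RingHom.id_apply, smul_eq_mul]
        exact betaSeries_smul_right β c u v }
  map_add' u u' := LinearMap.ext fun v => betaSeries_add_left β u u' v
  map_smul' c u := LinearMap.ext fun v => by
    simp only [RingHom.id_apply, LinearMap.smul_apply, LinearMap.coe_mk, AddHom.coe_mk,
      smul_eq_mul]
    exact betaSeries_smul_left β c u v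

theorem betaBil_apply (β : B →ₗ[ℝ] B →ₗ[ℝ] ℝ) (u v : ℕ → B) :
    betaBil β u v = betaSeries β u v := rfl

theorem betaSeries_starMap (β : B →ₗ[ℝ] B →ₗ[ℝ] ℝ) (F : ℕ → B →ₗ[ℝ] B)
    (hF : ∀ (n : ℕ) (u v : B), β (F n u) v = β u (F n v)) (u v : ℕ → B) :
    betaSeries β (starMap F u) v = betaSeries β u (starMap F v) := by
  ext n
  rw [betaSeries_coeff, betaSeries_coeff]
  calc ∑ p ∈ antidiagonal n, β (starMap F u p.1) (v p.2)
      = ∑ p ∈ antidiagonal n, ∑ q ∈ antidiagonal p.1, β (u q.2) (F q.1 (v p.2)) := by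
        refine Finset.sum_congr rfl fun p _ => ?_
        rw [starMap_apply (K := ℝ), map_sum, LinearMap.sum_apply]
        exact Finset.sum_congr rfl fun q _ => hF _ _ _
    _ = ∑ p ∈ antidiagonal n, ∑ q ∈ antidiagonal p.2, β (u q.1) (F p.1 (v q.2)) :=
        (sum_ad_assoc n fun a b e => β (u b) (F a (v e))).symm
    _ = ∑ p ∈ antidiagonal n, ∑ q ∈ antidiagonal p.2, β (u p.1) (F q.1 (v q.2)) :=
        (sum_ad_swap n fun a b e => β (u a) (F b (v e))).symm
    _ = ∑ p ∈ antidiagonal n, β (u p.1) (starMap F v p.2) := by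
        refine Finset.sum_congr rfl fun p _ => ?_
        rw [starMap_apply (K := ℝ), map_sum]

theorem betaSeries_nondeg (A : Submodule ℝ B) (β : B →ₗ[ℝ] B →ₗ[ℝ] ℝ)
    (hβnd : ∀ u : B, (∀ a ∈ A, β u a = 0) → u = 0) (u : ℕ → B)
    (h : ∀ ψ : ℕ → ↥A, betaSeries β u (cwMap A.subtype ψ) = 0) : u = 0 := by
  funext k
  show u k = 0
  apply hβnd
  intro a ha
  have h2 := congrArg (PowerSeries.coeff (R := ℝ) k) (h fun m => if m = 0 then ⟨a, ha⟩ else 0)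
  rw [betaSeries_coeff, map_zero] at h2
  rw [Finset.sum_eq_single (k, 0)] at h2
  · simpa [cwMap_apply] using h2
  · rintro ⟨i, j⟩ hmem hne
    have hj : j ≠ 0 := by
      intro hj
      apply hne
      subst hj
      simp only [Finset.HasAntidiagonal.mem_antidiagonal] at hmem
      simp [← hmem]
    show (β (u i)) (cwMap A.subtype (fun m => if m = 0 then (⟨a, ha⟩ : ↥A) else 0) j) = 0
    rw [cwMap_apply, if_neg hj]
    simp
  · intro hk
    exact absurd (by simp) hk

open Classical in
def pick (A : Submodule ℝ B) (P : B →ₗ[ℝ] B) (s : B) : ↥A :=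
  if h : ∃ b ∈ A, s = P b then ⟨Classical.choose h, (Classical.choose_spec h).1⟩ else 0

open Classical in
theorem pick_spec (A : Submodule ℝ B) (P : B →ₗ[ℝ] B) (s : B) (h : ∃ b ∈ A, s = P b) :
    s = P ↑(pick A P s) := by
  rw [pick, dif_pos h]
  exact (Classical.choose_spec h).2

/-- The recursively constructed preimage of `φ` under `P_⋆`. -/
def chiAux (A : Submodule ℝ B) (Pn : ℕ → B →ₗ[ℝ] B) (φ : ℕ → ↥A) : ℕ → ↥A
  | n => pick A (Pn 0) ((φ n : B) - ∑ p ∈ (antidiagonal n).attach,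
      if h : p.1.2 < n then Pn p.1.1 ↑(chiAux A Pn φ p.1.2) else 0)
  termination_by n => n
  decreasing_by exact h

theorem exactness (A : Submodule ℝ B) (Pn : ℕ → B →ₗ[ℝ] B)
    (hPA : ∀ a ∈ A, Pn 0 a ∈ A) (hPpos : ∀ n, 0 < n → ∀ u : B, Pn n u ∈ A)
    (Dp Dm : B →ₗ[ℝ] B)
    (hex₁ : ∀ a ∈ A, Dp a - Dm a = 0 → ∃ b ∈ A, a = Pn 0 b)
    (hGPp : ∀ χ : ℕ → ↥A,
      starMap (dGreen Dp Pn) (starMap Pn (cwMap A.subtype χ)) = cwMap A.subtype χ)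
    (hGPm : ∀ χ : ℕ → ↥A,
      starMap (dGreen Dm Pn) (starMap Pn (cwMap A.subtype χ)) = cwMap A.subtype χ)
    (φ : ℕ → ↥A)
    (hG : starMap (dGreen Dp Pn) (cwMap A.subtype φ)
        - starMap (dGreen Dm Pn) (cwMap A.subtype φ) = 0) :
    ∃ χ : ℕ → ↥A, starMap (restA A Pn hPA hPpos) χ = φ := by
  set χ : ℕ → ↥A := chiAux A Pn φ with hχ
  have inv : ∀ n : ℕ, (φ n : B) = ∑ p ∈ antidiagonal n, Pn p.1 ↑(χ p.2) := by
    intro n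
    induction n using Nat.strong_induction_on with
    | _ n ih =>
      set χtr : ℕ → ↥A := fun k => if k < n then χ k else 0 with hχtr
      set ρ : ℕ → B := cwMap A.subtype φ - starMap Pn (cwMap A.subtype χtr) with hρ
      have hStr : ∀ k, starMap Pn (cwMap A.subtype χtr) k
          = ∑ p ∈ antidiagonal k, Pn p.1 ↑(χtr p.2) := fun k => by
        rw [starMap_apply (K := ℝ)]
        rfl
      have hρk0 : ∀ k, ρ k = (φ k : B) - ∑ p ∈ antidiagonal k, Pn p.1 ↑(χtr p.2) := by
        intro k
        rw [hρ, Pi.sub_apply, hStr]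
        rfl
      have hρk : ∀ k < n, ρ k = 0 := by
        intro k hk
        rw [hρk0 k]
        have he : ∀ p ∈ antidiagonal k, Pn p.1 ((χtr p.2 : B)) = Pn p.1 ↑(χ p.2) := by
          intro p hp
          have hp2 : p.2 ≤ k := by
            have := Finset.HasAntidiagonal.mem_antidiagonal.mp hp
            omega
          rw [hχtr]
          simp only [if_pos (by omega : p.2 < n)]
        rw [Finset.sum_congr rfl he, ← ih k hk, sub_self]
      have hGdρ : starMap (dGreen Dp Pn) ρ - starMap (dGreen Dm Pn) ρ = 0 := by
        rw [hρ, map_sub, map_sub, hGPp χtr, hGPm χtr]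
        rw [sub_sub_sub_cancel_right]
        exact hG
      have hcoeff : Dp (ρ n) - Dm (ρ n) = 0 := by
        have h3 := congrFun hGdρ n
        rw [Pi.sub_apply, Pi.zero_apply, starMap_apply (K := ℝ), starMap_apply (K := ℝ),
          ← Finset.sum_sub_distrib] at h3
        rw [Finset.sum_eq_single (0, n)] at h3
        · rw [dGreen_zero, dGreen_zero] at h3
          exact h3
        · rintro ⟨i, j⟩ hmem hne
          have h4 : i + j = n := Finset.HasAntidiagonal.mem_antidiagonal.mp hmem
          have hj : j < n := by
            rcases Nat.lt_or_ge j n with h | h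
            · exact h
            · exfalso
              apply hne
              have hjn : j = n := by omega
              subst hjn
              have hi0 : i = 0 := by omega
              subst hi0
              rfl
          rw [hρk j hj, map_zero, map_zero, sub_self]
        · intro hmm
          exact absurd (by simp) hmm
      have hρA : ρ n ∈ A := by
        rw [hρk0 n]
        refine sub_mem (φ n).2 (Submodule.sum_mem A fun p _ => ?_)
        rcases Nat.eq_zero_or_pos p.1 with h | h
        · rw [h]
          exact hPA _ (χtr p.2).2
        · exact hPpos p.1 h _
      have hpick := pick_spec A (Pn 0) (ρ n) (hex₁ (ρ n) hρA hcoeff)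
      have harg : ((φ n : B) - ∑ p ∈ (antidiagonal n).attach,
          if h : p.1.2 < n then Pn p.1.1 ↑(chiAux A Pn φ p.1.2) else 0) = ρ n := by
        rw [hρk0 n]
        congr 1
        rw [← Finset.sum_attach (antidiagonal n) (fun p => Pn p.1 ((χtr p.2 : B)))]
        refine Finset.sum_congr rfl fun p _ => ?_
        rcases Nat.lt_or_ge p.1.2 n with h | h
        · simp only [dif_pos h, hχtr, if_pos h, ← hχ]
        · simp only [dif_neg (not_lt.mpr h), hχtr, if_neg (not_lt.mpr h)]
          simp
      have hχn : χ n = pick A (Pn 0) (ρ n) := by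
        rw [hχ]
        conv_lhs => rw [chiAux]
        rw [harg]
      rw [← hχn] at hpick
      have key : ∑ p ∈ antidiagonal n, Pn p.1 ((χ p.2 : B))
          - ∑ p ∈ antidiagonal n, Pn p.1 ((χtr p.2 : B)) = Pn 0 ↑(χ n) := by
        rw [← Finset.sum_sub_distrib, Finset.sum_eq_single (0, n)]
        · rw [hχtr]
          simp only [if_neg (lt_irrefl n)]
          simp
        · rintro ⟨i, j⟩ hmem hne
          have h4 : i + j = n := Finset.HasAntidiagonal.mem_antidiagonal.mp hmem
          have hj : j < n := by
            rcases Nat.lt_or_ge j n with h | h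
            · exact h
            · exfalso
              apply hne
              have hjn : j = n := by omega
              subst hjn
              have hi0 : i = 0 := by omega
              subst hi0
              rfl
          rw [hχtr]
          simp only [if_pos hj, sub_self]
        · intro hmm
          exact absurd (by simp) hmm
      have h5 := hρk0 n
      rw [hpick] at h5
      have h6 : (φ n : B) = Pn 0 ↑(χ n) + ∑ p ∈ antidiagonal n, Pn p.1 ((χtr p.2 : B)) :=
        sub_eq_iff_eq_add.mp h5.symm
      rw [h6, ← key]
      abel
  refine ⟨χ, funext fun n => Subtype.ext ?_⟩
  show cwMap A.subtype (starMap (restA A Pn hPA hPpos) χ) n = ((φ n : B))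
  rw [← iota_Pst A Pn hPA hPpos χ, starMap_apply (K := ℝ)]
  exact (inv n).symm

theorem adjoint_lemma (A : Submodule ℝ B) (Pn : ℕ → B →ₗ[ℝ] B)
    (Dp Dm : B →ₗ[ℝ] B)
    (hPDp : ∀ a ∈ A, Pn 0 (Dp a) = a) (hPDm : ∀ a ∈ A, Pn 0 (Dm a) = a)
    (hPpos : ∀ n, 0 < n → ∀ u : B, Pn n u ∈ A)
    (β : B →ₗ[ℝ] B →ₗ[ℝ] ℝ)
    (hβP : ∀ (n : ℕ) (u v : B), β (Pn n u) v = β u (Pn n v))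
    (φ ψ : ℕ → ↥A) :
    betaSeries β (starMap (dGreen Dp Pn) (cwMap A.subtype φ)) (cwMap A.subtype ψ)
      = betaSeries β (cwMap A.subtype φ) (starMap (dGreen Dm Pn) (cwMap A.subtype ψ)) := by
  conv_lhs => rw [← Pst_Gst A Pn Dm hPDm hPpos ψ]
  rw [← betaSeries_starMap β Pn hβP, Pst_Gst A Pn Dp hPDp hPpos φ]

theorem green_inverts (A : Submodule ℝ B) (Pn : ℕ → B →ₗ[ℝ] B)
    (hPA : ∀ a ∈ A, Pn 0 a ∈ A) (hPpos : ∀ n, 0 < n → ∀ u : B, Pn n u ∈ A)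
    (Dp Dm : B →ₗ[ℝ] B)
    (hPDp : ∀ a ∈ A, Pn 0 (Dp a) = a) (hPDm : ∀ a ∈ A, Pn 0 (Dm a) = a)
    (β : B →ₗ[ℝ] B →ₗ[ℝ] ℝ)
    (hβP : ∀ (n : ℕ) (u v : B), β (Pn n u) v = β u (Pn n v))
    (hβnd : ∀ u : B, (∀ a ∈ A, β u a = 0) → u = 0)
    (χ : ℕ → ↥A) :
    starMap (dGreen Dp Pn) (starMap Pn (cwMap A.subtype χ)) = cwMap A.subtype χ := by
  have hv : ∀ ψ : ℕ → ↥A,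
      betaSeries β (starMap (dGreen Dp Pn) (starMap Pn (cwMap A.subtype χ))
        - cwMap A.subtype χ) (cwMap A.subtype ψ) = 0 := by
    intro ψ
    rw [betaSeries_sub_left]
    have h1 : betaSeries β (starMap (dGreen Dp Pn) (starMap Pn (cwMap A.subtype χ)))
        (cwMap A.subtype ψ) = betaSeries β (cwMap A.subtype χ) (cwMap A.subtype ψ) := by
      rw [iota_Pst A Pn hPA hPpos χ,
        adjoint_lemma A Pn Dp Dm hPDp hPDm hPpos β hβP _ ψ,
        ← iota_Pst A Pn hPA hPpos χ, betaSeries_starMap β Pn hβP,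
        Pst_Gst A Pn Dm hPDm hPpos ψ]
    rw [h1, sub_self]
  exact sub_eq_zero.mp (betaSeries_nondeg A β hβnd _ hv)

end Aux

set_option maxHeartbeats 1000000 in
/-- `(V_⋆, ω_⋆)` is a symplectic `ℝ[[λ]]`-module, where
`V_⋆ := A[[λ]]/P_⋆[A[[λ]]]` and `ω_⋆([φ],[ψ]) := β(φ, Δ_⋆(ψ))`: the map `ω_⋆` is well-defined
on the quotient, `ℝ[[λ]]`-bilinear, antisymmetric, and weakly nondegenerate. -/
theorem statement_3
    (A : Submodule ℝ B)
    -- the family `P_(n)` (`P := P_(0)`), with `P(A) ⊆ A` and `P_(n) : B → A` for `n ≥ 1`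
    (Pn : ℕ → B →ₗ[ℝ] B)
    (hPA : ∀ a ∈ A, Pn 0 a ∈ A)
    (hPpos : ∀ n, 0 < n → ∀ u : B, Pn n u ∈ A)
    -- the undeformed retarded/advanced Green's operators `Δ_±` (defined on `A`)
    (Dp Dm : B →ₗ[ℝ] B)
    (hPDp : ∀ a ∈ A, Pn 0 (Dp a) = a) (hDpP : ∀ a ∈ A, Dp (Pn 0 a) = a)
    (hPDm : ∀ a ∈ A, Pn 0 (Dm a) = a) (hDmP : ∀ a ∈ A, Dm (Pn 0 a) = a)
    -- undeformed exactness: `ker Δ ∩ A = P(A)` and `ker P = Δ(A)`, where `Δ = Δ_+ − Δ_−`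
    (hex₁ : ∀ a ∈ A, Dp a - Dm a = 0 → ∃ b ∈ A, a = Pn 0 b)
    (hex₂ : ∀ u : B, Pn 0 u = 0 → ∃ a ∈ A, u = Dp a - Dm a)
    -- `β`: a symmetric bilinear form, each `P_(n)` formally self-adjoint,
    -- `β` nondegenerate against `A`
    (β : B →ₗ[ℝ] B →ₗ[ℝ] ℝ)
    (hβsymm : ∀ u v : B, β u v = β v u)
    (hβP : ∀ (n : ℕ) (u v : B), β (Pn n u) v = β u (Pn n v))
    (hβnd : ∀ u : B, (∀ a ∈ A, β u a = 0) → u = 0)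
 :
    ∃ ω : ((ℕ → ↥A) ⧸ LinearMap.range (starMap (restA A Pn hPA hPpos)))
            →ₗ[PowerSeries ℝ]
          ((ℕ → ↥A) ⧸ LinearMap.range (starMap (restA A Pn hPA hPpos)))
            →ₗ[PowerSeries ℝ] PowerSeries ℝ,
      -- well-definedness and the defining formula `ω_⋆([φ],[ψ]) = β(φ, Δ_⋆(ψ))`
      (∀ φ ψ : ℕ → ↥A,
        ω (Submodule.Quotient.mk φ) (Submodule.Quotient.mk ψ)
          = betaSeries β (cwMap A.subtype φ)
              (starMap (dGreen Dp Pn) (cwMap A.subtype ψ)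
                - starMap (dGreen Dm Pn) (cwMap A.subtype ψ))) ∧
      -- antisymmetry
      (∀ x y, ω x y = - ω y x) ∧
      -- weak nondegeneracy
      (∀ x, (∀ y, ω x y = 0) → x = 0) := by
  classical
  set ι : (ℕ → ↥A) →ₗ[PowerSeries ℝ] (ℕ → B) := cwMap A.subtype with hι
  set Gp : (ℕ → B) →ₗ[PowerSeries ℝ] (ℕ → B) := starMap (dGreen Dp Pn) with hGp
  set Gm : (ℕ → B) →ₗ[PowerSeries ℝ] (ℕ → B) := starMap (dGreen Dm Pn) with hGm
  set Pst : (ℕ → B) →ₗ[PowerSeries ℝ] (ℕ → B) := starMap Pn with hPst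
  set PstA : (ℕ → ↥A) →ₗ[PowerSeries ℝ] (ℕ → ↥A) := starMap (restA A Pn hPA hPpos) with hPstA
  have h_PGp : ∀ ψ : ℕ → ↥A, Pst (Gp (ι ψ)) = ι ψ := Pst_Gst A Pn Dp hPDp hPpos
  have h_PGm : ∀ ψ : ℕ → ↥A, Pst (Gm (ι ψ)) = ι ψ := Pst_Gst A Pn Dm hPDm hPpos
  have h_bP : ∀ u v : ℕ → B, betaSeries β (Pst u) v = betaSeries β u (Pst v) :=
    betaSeries_starMap β Pn hβP
  have hsym := betaSeries_symm β hβsymm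
  have hiP : ∀ χ : ℕ → ↥A, Pst (ι χ) = ι (PstA χ) := iota_Pst A Pn hPA hPpos
  have hadj : ∀ φ ψ : ℕ → ↥A,
      betaSeries β (Gp (ι φ)) (ι ψ) = betaSeries β (ι φ) (Gm (ι ψ)) :=
    adjoint_lemma A Pn Dp Dm hPDp hPDm hPpos β hβP
  have hadj' : ∀ φ ψ : ℕ → ↥A,
      betaSeries β (Gm (ι φ)) (ι ψ) = betaSeries β (ι φ) (Gp (ι ψ)) :=
    adjoint_lemma A Pn Dm Dp hPDm hPDp hPpos β hβP
  have hGpP : ∀ χ : ℕ → ↥A, Gp (Pst (ι χ)) = ι χ :=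
    green_inverts A Pn hPA hPpos Dp Dm hPDp hPDm β hβP hβnd
  have hGmP : ∀ χ : ℕ → ↥A, Gm (Pst (ι χ)) = ι χ :=
    green_inverts A Pn hPA hPpos Dm Dp hPDm hPDp β hβP hβnd
  -- the raw bilinear form
  set Ω : (ℕ → ↥A) →ₗ[PowerSeries ℝ] (ℕ → ↥A) →ₗ[PowerSeries ℝ] PowerSeries ℝ :=
    LinearMap.compl₂ ((betaBil β).comp ι) ((Gp - Gm) ∘ₗ ι) with hΩdef
  have hΩ : ∀ φ ψ : ℕ → ↥A,
      Ω φ ψ = betaSeries β (ι φ) (Gp (ι ψ) - Gm (ι ψ)) := by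
    intro φ ψ
    rw [hΩdef]
    simp only [LinearMap.compl₂_apply, LinearMap.comp_apply, LinearMap.sub_apply]
    rw [betaBil_apply]
  have hanti : ∀ φ ψ : ℕ → ↥A, Ω φ ψ = -Ω ψ φ := by
    intro φ ψ
    rw [hΩ, hΩ, betaSeries_sub_right, betaSeries_sub_right]
    have e1 : betaSeries β (ι φ) (Gp (ι ψ)) = betaSeries β (ι ψ) (Gm (ι φ)) := by
      rw [← hadj' φ ψ]
      exact hsym _ _
    have e2 : betaSeries β (ι φ) (Gm (ι ψ)) = betaSeries β (ι ψ) (Gp (ι φ)) := by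
      rw [← hadj φ ψ]
      exact hsym _ _
    rw [e1, e2]
    ring
  have hvan : ∀ (φ : ℕ → ↥A) (χ : ℕ → ↥A), Ω φ (PstA χ) = 0 := by
    intro φ χ
    rw [hΩ, ← hiP, hGpP, hGmP, sub_self]
    have : betaSeries β (ι φ) 0 = betaBil β (ι φ) 0 := rfl
    rw [this, map_zero]
  set R : Submodule (PowerSeries ℝ) (ℕ → ↥A) :=
    LinearMap.range (starMap (restA A Pn hPA hPpos)) with hR
  have hker : ∀ φ : ℕ → ↥A, R ≤ LinearMap.ker (Ω φ) := by
    intro φ x hx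
    obtain ⟨χ, rfl⟩ := hx
    exact LinearMap.mem_ker.mpr (hvan φ χ)
  set ω₂ : (ℕ → ↥A) →ₗ[PowerSeries ℝ]
      (((ℕ → ↥A) ⧸ R) →ₗ[PowerSeries ℝ] PowerSeries ℝ) :=
    { toFun := fun φ => Submodule.liftQ R (Ω φ) (hker φ)
      map_add' := fun φ φ' => by
        refine LinearMap.ext fun y => ?_
        obtain ⟨ψ, rfl⟩ := Submodule.Quotient.mk_surjective R y
        simp [Submodule.liftQ_apply]
      map_smul' := fun c φ => by
        refine LinearMap.ext fun y => ?_
        obtain ⟨ψ, rfl⟩ := Submodule.Quotient.mk_surjective R y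
        simp [Submodule.liftQ_apply] } with hω₂
  have hω₂apply : ∀ φ ψ : ℕ → ↥A, ω₂ φ (Submodule.Quotient.mk ψ) = Ω φ ψ := by
    intro φ ψ
    simp [hω₂, Submodule.liftQ_apply]
  have hker2 : R ≤ LinearMap.ker ω₂ := by
    intro x hx
    refine LinearMap.mem_ker.mpr (LinearMap.ext fun y => ?_)
    obtain ⟨ψ, rfl⟩ := Submodule.Quotient.mk_surjective R y
    rw [hω₂apply]
    obtain ⟨χ, rfl⟩ := hx
    rw [hanti]
    rw [hvan ψ χ, neg_zero]
    simp
  refine ⟨Submodule.liftQ R ω₂ hker2, ?_, ?_, ?_⟩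
  · intro φ ψ
    rw [Submodule.liftQ_apply, hω₂apply, hΩ]
  · intro x y
    obtain ⟨φ, rfl⟩ := Submodule.Quotient.mk_surjective R x
    obtain ⟨ψ, rfl⟩ := Submodule.Quotient.mk_surjective R y
    rw [Submodule.liftQ_apply, Submodule.liftQ_apply, hω₂apply, hω₂apply]
    exact hanti φ ψ
  · intro x hx
    obtain ⟨φ, rfl⟩ := Submodule.Quotient.mk_surjective R x
    have hzero : ∀ ψ : ℕ → ↥A, Ω φ ψ = 0 := by
      intro ψ
      have := hx (Submodule.Quotient.mk ψ)
      rwa [Submodule.liftQ_apply, hω₂apply] at this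
    have hpair : ∀ ψ : ℕ → ↥A, betaSeries β (Gp (ι φ) - Gm (ι φ)) (ι ψ) = 0 := by
      intro ψ
      have h1 : Ω ψ φ = 0 := by
        rw [hanti, hzero, neg_zero]
      rw [hΩ] at h1
      rw [hsym]
      exact h1
    have hGd : Gp (ι φ) - Gm (ι φ) = 0 := betaSeries_nondeg A β hβnd _ hpair
    obtain ⟨χ, hχ⟩ := exactness A Pn hPA hPpos Dp Dm hex₁
      (fun χ => hGpP χ) (fun χ => hGmP χ) φ hGd
    rw [Submodule.Quotient.mk_eq_zero]
    exact ⟨χ, hχ⟩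

end NCQFT
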